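/- For all natural numbers n ≥ 1 and m, the sum Σ_{q=1}^{2m+1} (-1)^q · q · C(n,q)·C(n,2m+1-q) equals -n·(-1)^m·C(n-1,m). -/

import Mathlib

/-! Compare the coefficients of `X ^ (2 * m)` on both sides of
`((1 - X) ^ n)' * (1 + X) ^ n = -n (1 + X) (1 - X ^ 2) ^ (n - 1)`: on the left this is the
convolution in the statement, on the right only the `1` of `1 + X` contributes, because
`(1 - X ^ 2) ^ (n - 1)` has no odd coefficients. -/

open Polynomial Finset

namespace Polynomial

variable {R : Type*} [CommRing R]

theorem coeff_one_sub_X_pow (n k : ℕ) :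
    ((1 - X : R[X]) ^ n).coeff k = (-1) ^ k * n.choose k := by
  have h : (1 - X : R[X]) ^ n = ((1 + X) ^ n).comp (C (-1) * X) := by
    simp [sub_eq_add_neg]
  rw [h, comp_C_mul_X_coeff, coeff_one_add_X_pow, mul_comm]

theorem one_sub_X_sq_pow_eq_expand (a : ℕ) :
    (1 - X ^ 2 : R[X]) ^ a = expand R 2 ((1 - X) ^ a) := by
  simp

theorem coeff_one_sub_X_sq_pow_two_mul (a k : ℕ) :
    ((1 - X ^ 2 : R[X]) ^ a).coeff (2 * k) = (-1) ^ k * a.choose k := by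
  rw [one_sub_X_sq_pow_eq_expand, coeff_expand_mul' two_pos, coeff_one_sub_X_pow]

theorem coeff_one_sub_X_sq_pow_two_mul_add_one (a k : ℕ) :
    ((1 - X ^ 2 : R[X]) ^ a).coeff (2 * k + 1) = 0 := by
  rw [one_sub_X_sq_pow_eq_expand, coeff_expand two_pos, if_neg (by omega)]

theorem coeff_one_add_X_mul_one_sub_X_sq_pow_two_mul (a k : ℕ) :
    ((1 + X) * (1 - X ^ 2 : R[X]) ^ a).coeff (2 * k) = (-1 : R) ^ k * a.choose k := by
  rw [add_mul, one_mul, coeff_add, coeff_one_sub_X_sq_pow_two_mul, add_eq_left]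
  rcases k with _ | k
  · exact coeff_X_mul_zero _
  · rw [show 2 * (k + 1) = 2 * k + 1 + 1 by ring, coeff_X_mul,
      coeff_one_sub_X_sq_pow_two_mul_add_one]

theorem derivative_one_sub_X_pow_mul_one_add_X_pow (n : ℕ) :
    derivative ((1 - X : R[X]) ^ n) * (1 + X) ^ n
      = -(n : R[X]) * ((1 + X) * (1 - X ^ 2) ^ (n - 1)) := by
  rcases n with _ | n
  · simp
  · rw [derivative_pow, derivative_sub, derivative_one, derivative_X, Nat.add_sub_cancel,
      show (1 - X ^ 2 : R[X]) = (1 - X) * (1 + X) by ring, mul_pow, C_eq_natCast]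
    ring

theorem coeff_derivative_mul (f g : R[X]) (k : ℕ) :
    (derivative f * g).coeff k
      = ∑ q ∈ Icc 1 (k + 1), (q : R) * f.coeff q * g.coeff (k + 1 - q) := by
  rw [coeff_mul, Nat.sum_antidiagonal_eq_sum_range_succ_mk, ← Ico_add_one_right_eq_Icc,
    sum_Ico_eq_sum_range]
  refine sum_congr (by simp) fun i _ => ?_
  rw [coeff_derivative, show k + 1 - (1 + i) = k - i by omega, add_comm 1 i]
  push_cast
  ring

end Polynomial

theorem alternating_derivative_convolution_general (n m : ℕ) :
    ∑ q ∈ Finset.Icc 1 (2 * m + 1),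
        (-1 : ℤ) ^ q * (q : ℤ) * (n.choose q : ℤ) * (n.choose (2 * m + 1 - q) : ℤ)
      = -(n : ℤ) * (-1 : ℤ) ^ m * ((n - 1).choose m : ℤ) := by
  have h := congrArg (coeff · (2 * m)) (derivative_one_sub_X_pow_mul_one_add_X_pow (R := ℤ) n)
  simp only [coeff_derivative_mul, coeff_one_sub_X_pow, coeff_one_add_X_pow, neg_mul,
    coeff_neg, coeff_natCast_mul, coeff_one_add_X_mul_one_sub_X_sq_pow_two_mul] at h
  rw [mul_assoc, neg_mul, ← h]
  exact sum_congr rfl fun q _ => by ring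

theorem alternating_derivative_convolution (n m : ℕ) (hn : 1 ≤ n) :
    ∑ q ∈ Finset.Icc 1 (2 * m + 1),
        (-1 : ℤ) ^ q * (q : ℤ) * (n.choose q : ℤ) * (n.choose (2 * m + 1 - q) : ℤ)
      = -(n : ℤ) * (-1 : ℤ) ^ m * ((n - 1).choose m : ℤ) :=
  alternating_derivative_convolution_general n m
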